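/- arXiv:math/0507022 — 4 statements merged into one kernel-verified Lean document; each statement's English description precedes it below -/
import Mathlib

section
/- Let E have dimension N, S dimension s, c = N - d, and let F be a complete flag of E, T a complete flag of S. Define the flag B of E ⊕ S by B_i = {0} × T_i (i ≤ s), B_i = F_{i-s} × S (s ≤ i ≤ N+s). For a partition λ = (λ₁ ≥ ⋯ ≥ λ_d) with λ₁ ≤ c, let c^sλ = (c, …, c, λ₁, …, λ_d) (c repeated s times), a partition of length d + s with parts ≤ c. Then for the embedding v : G^c(E) → G^c(E⊕S), P ↦ P × S (where G^c denotes subspaces of codimension c), one has v(Ω_λ(F)) = Ω_{c^sλ}(B), where Ω_{c^sλ}(B) = {Q ⊆ E⊕S of dim d+s : dim(Q ∩ B_{c+j-(c^sλ)_j}) ≥ j for 1 ≤ j ≤ d+s} and Ω_λ(F) = {P ⊆ E of dim d : dim(P ∩ F_{c+i-λᵢ}) ≥ i for 1 ≤ i ≤ d}. -/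
/-- The product of two submodules is linearly equivalent to the product of the
underlying modules. -/
def Submodule.prodEquivAux {R M N : Type*} [CommRing R] [AddCommGroup M] [Module R M]
    [AddCommGroup N] [Module R N] (p : Submodule R M) (q : Submodule R N) :
    (p.prod q : Submodule R (M × N)) ≃ₗ[R] p × q where
  toFun x := (⟨x.1.1, x.2.1⟩, ⟨x.1.2, x.2.2⟩)
  invFun x := ⟨(x.1, x.2), x.1.2, x.2.2⟩
  map_add' _ _ := rfl
  map_smul' _ _ := rfl
  left_inv _ := rfl
  right_inv _ := rfl

lemma finrank_prod_submodule {M N : Type*} [AddCommGroup M] [Module ℂ M]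
    [AddCommGroup N] [Module ℂ N] (p : Submodule ℂ M) (q : Submodule ℂ N)
    [FiniteDimensional ℂ p] [FiniteDimensional ℂ q] :
    Module.finrank ℂ (p.prod q) = Module.finrank ℂ p + Module.finrank ℂ q := by
  rw [(Submodule.prodEquivAux p q).finrank_eq, Module.finrank_prod]

/-- `v(Ω_λ(F)) = Ω_{c^sλ}(B)` for the embedding `v : P ↦ P × S`,
where `c^sλ = (c,…,c,λ₁,…,λ_d)` with `c` repeated `s` times. -/
theorem stmt_9 (E S : Type*) [AddCommGroup E] [Module ℂ E] [FiniteDimensional ℂ E]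
    [AddCommGroup S] [Module ℂ S] [FiniteDimensional ℂ S]
    (N s d c : ℕ) (hN : Module.finrank ℂ E = N) (hs : Module.finrank ℂ S = s)
    (hdN : d ≤ N) (hc : c = N - d)
    (F : ℕ → Submodule ℂ E) (hFmono : Monotone F)
    (hFrank : ∀ k, k ≤ N → Module.finrank ℂ (F k) = k)
    (T : ℕ → Submodule ℂ S) (hTmono : Monotone T)
    (hTrank : ∀ k, k ≤ s → Module.finrank ℂ (T k) = k)
    (B : ℕ → Submodule ℂ (E × S))
    (hB1 : ∀ i, i ≤ s → B i = (⊥ : Submodule ℂ E).prod (T i))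
    (hB2 : ∀ i, s ≤ i → i ≤ N + s → B i = (F (i - s)).prod (⊤ : Submodule ℂ S))
    (lam : ℕ → ℕ) (hlam_anti : ∀ i j, 1 ≤ i → i ≤ j → j ≤ d → lam j ≤ lam i)
    (hlam_le : ∀ i, 1 ≤ i → i ≤ d → lam i ≤ c)
    (mu : ℕ → ℕ) (hmu1 : ∀ j, 1 ≤ j → j ≤ s → mu j = c)
    (hmu2 : ∀ i, 1 ≤ i → i ≤ d → mu (s + i) = lam i) :
    {Q : Submodule ℂ (E × S) |
        ∃ P : Submodule ℂ E, Module.finrank ℂ P = d ∧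
          (∀ i, 1 ≤ i → i ≤ d → i ≤ Module.finrank ℂ ↥(P ⊓ F (c + i - lam i))) ∧
          Q = P.prod (⊤ : Submodule ℂ S)} =
      {Q : Submodule ℂ (E × S) | Module.finrank ℂ Q = d + s ∧
        ∀ j, 1 ≤ j → j ≤ d + s →
          j ≤ Module.finrank ℂ ↥(Q ⊓ B (c + j - mu j))} := by
  have hcd : c + d = N := by omega
  have htop : Module.finrank ℂ (⊤ : Submodule ℂ S) = s := by rw [finrank_top]; exact hs
  ext Q
  simp only [Set.mem_setOf_eq]
  constructor
  · rintro ⟨P, hPd, hPcond, rfl⟩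
    refine ⟨?_, ?_⟩
    · rw [finrank_prod_submodule, hPd, htop]
    · intro j hj1 hjds
      by_cases hjs : j ≤ s
      · -- first s conditions
        rw [hmu1 j hj1 hjs]
        have hidx : c + j - c = j := by omega
        rw [hidx, hB1 j hjs]
        have hle : (⊥ : Submodule ℂ E).prod (T j) ≤
            P.prod (⊤ : Submodule ℂ S) ⊓ (⊥ : Submodule ℂ E).prod (T j) :=
          le_inf (Submodule.prod_mono bot_le le_top) le_rfl
        calc j = Module.finrank ℂ ((⊥ : Submodule ℂ E).prod (T j)) := by
                  rw [finrank_prod_submodule, finrank_bot, hTrank j hjs]; omega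
          _ ≤ _ := Submodule.finrank_mono hle
      · -- remaining d conditions
        set i := j - s with hi
        have hi1 : 1 ≤ i := by omega
        have hid : i ≤ d := by omega
        have hji : j = s + i := by omega
        have hmu : mu j = lam i := by rw [hji]; exact hmu2 i hi1 hid
        have hlc : lam i ≤ c := hlam_le i hi1 hid
        have hidx : c + j - mu j = (c + i - lam i) + s := by rw [hmu]; omega
        have hkN : c + i - lam i ≤ N := by omega
        rw [hidx, hB2 _ (by omega) (by omega)]
        have hidx2 : c + i - lam i + s - s = c + i - lam i := by omega
        rw [hidx2, Submodule.prod_inf_prod, inf_top_eq, finrank_prod_submodule, htop]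
        have := hPcond i hi1 hid
        omega
  · rintro ⟨hQ, hcond⟩
    -- First show ⊥ × ⊤ ≤ Q
    have hbot : ((⊥ : Submodule ℂ E).prod (⊤ : Submodule ℂ S)) ≤ Q := by
      rcases Nat.eq_zero_or_pos s with hs0 | hs1
      · intro x hx
        obtain ⟨hx1, -⟩ := hx
        have hS : Subsingleton S := Module.finrank_zero_iff.mp (by rw [hs, hs0])
        have hx0 : x = 0 := by
          ext
          · simpa using hx1
          · exact Subsingleton.elim _ _
        rw [hx0]; exact Q.zero_mem
      · have h1 := hcond s hs1 (by omega)
        rw [hmu1 s hs1 le_rfl] at h1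
        have hidx : c + s - c = s := by omega
        rw [hidx, hB1 s le_rfl] at h1
        have hTs : T s = ⊤ := Submodule.eq_top_of_finrank_eq (by rw [hTrank s le_rfl, hs])
        rw [hTs] at h1
        have hle : Q ⊓ (⊥ : Submodule ℂ E).prod (⊤ : Submodule ℂ S) ≤
            (⊥ : Submodule ℂ E).prod (⊤ : Submodule ℂ S) := inf_le_right
        have hdim : Module.finrank ℂ ((⊥ : Submodule ℂ E).prod (⊤ : Submodule ℂ S)) ≤
            Module.finrank ℂ ↥(Q ⊓ (⊥ : Submodule ℂ E).prod (⊤ : Submodule ℂ S)) := by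
          rw [finrank_prod_submodule, finrank_bot, htop]
          simpa using h1
        have := Submodule.eq_of_le_of_finrank_le hle hdim
        rw [← this]
        exact inf_le_left
    set P : Submodule ℂ E := Q.map (LinearMap.fst ℂ E S) with hP
    have hQP : Q = P.prod (⊤ : Submodule ℂ S) := by
      apply le_antisymm
      · intro q hq
        exact ⟨⟨q, hq, rfl⟩, trivial⟩
      · rintro ⟨p, t⟩ ⟨⟨q, hq, hq1⟩, -⟩
        simp only [LinearMap.fst_apply] at hq1
        have h2 : ((0 : E), t - q.2) ∈ Q :=
          hbot ⟨Submodule.zero_mem _, trivial⟩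
        have : (p, t) = q + ((0 : E), t - q.2) := by
          ext
          · simp [hq1]
          · simp
        rw [this]
        exact Q.add_mem hq h2
    have hPd : Module.finrank ℂ P = d := by
      rw [hQP, finrank_prod_submodule, htop] at hQ
      omega
    refine ⟨P, hPd, ?_, hQP⟩
    intro i hi1 hid
    have h1 := hcond (s + i) (by omega) (by omega)
    rw [hmu2 i hi1 hid] at h1
    have hlc : lam i ≤ c := hlam_le i hi1 hid
    have hidx : c + (s + i) - lam i = (c + i - lam i) + s := by omega
    rw [hidx, hB2 _ (by omega) (by omega)] at h1
    have hidx2 : c + i - lam i + s - s = c + i - lam i := by omega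
    rw [hidx2, hQP, Submodule.prod_inf_prod, inf_top_eq, finrank_prod_submodule, htop] at h1
    omega
end

section
/- With E, S, flags F, T and flag D of E ⊕ S as above (D_i = F_i × {0} for i ≤ N, D_i = E × T_{i-N} for i ≥ N), let μ = (μ₁ ≥ ⋯ ≥ μ_{d+s}) be a partition with μ₁ ≤ c and μ_{d+1} = ⋯ = μ_{d+s} = 0 (last s rows of the diagram empty). Then for every P ∈ G^c(E): P × S ∈ Ω_μ(D) if and only if P ∈ Ω_μ(F), i.e. v⁻¹(Ω_μ(D)) = Ω_μ(F) where v(P) = P × S. -/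
section aux

variable {R M M₂ : Type*} [Ring R] [AddCommGroup M] [AddCommGroup M₂] [Module R M] [Module R M₂]

lemma aux_prod_inf_prod (p p' : Submodule R M) (q q' : Submodule R M₂) :
    p.prod q ⊓ p'.prod q' = (p ⊓ p').prod (q ⊓ q') := by
  ext ⟨x, y⟩
  simp only [Submodule.mem_inf, Submodule.mem_prod]
  tauto

/-- The product of two submodules is equivalent to their product as modules. -/
def auxProdEquiv (p : Submodule R M) (q : Submodule R M₂) : (p.prod q) ≃ₗ[R] p × q where
  toFun x := (⟨x.1.1, x.2.1⟩, ⟨x.1.2, x.2.2⟩)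
  invFun x := ⟨(x.1.1, x.2.1), x.1.2, x.2.2⟩
  map_add' _ _ := rfl
  map_smul' _ _ := rfl
  left_inv _ := rfl
  right_inv _ := rfl

lemma aux_finrank_prod {K V W : Type*} [Field K] [AddCommGroup V] [AddCommGroup W]
    [Module K V] [Module K W] [FiniteDimensional K V] [FiniteDimensional K W]
    (p : Submodule K V) (q : Submodule K W) :
    Module.finrank K (p.prod q) = Module.finrank K p + Module.finrank K q := by
  rw [(auxProdEquiv p q).finrank_eq, Module.finrank_prod]

end aux

/-- with `D` as above and `μ₁ ≤ c`, `μ_{d+1} = ⋯ = μ_{d+s} = 0`,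
for every `P` of dimension `d`: `P × S ∈ Ω_μ(D)` iff `P ∈ Ω_μ(F)`. -/
theorem stmt_12 (E S : Type*) [AddCommGroup E] [Module ℂ E] [FiniteDimensional ℂ E]
    [AddCommGroup S] [Module ℂ S] [FiniteDimensional ℂ S]
    (N s d c : ℕ) (hN : Module.finrank ℂ E = N) (hs : Module.finrank ℂ S = s)
    (hdN : d ≤ N) (hc : c = N - d)
    (F : ℕ → Submodule ℂ E) (hFmono : Monotone F)
    (hFrank : ∀ k, k ≤ N → Module.finrank ℂ (F k) = k)
    (T : ℕ → Submodule ℂ S) (hTmono : Monotone T)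
    (hTrank : ∀ k, k ≤ s → Module.finrank ℂ (T k) = k)
    (D : ℕ → Submodule ℂ (E × S))
    (hD1 : ∀ i, i ≤ N → D i = (F i).prod (⊥ : Submodule ℂ S))
    (hD2 : ∀ i, N ≤ i → i ≤ N + s → D i = (⊤ : Submodule ℂ E).prod (T (i - N)))
    (mu : ℕ → ℕ) (hmu_anti : ∀ i j, 1 ≤ i → i ≤ j → j ≤ d + s → mu j ≤ mu i)
    (hmu1 : mu 1 ≤ c) (hmu0 : ∀ i, d < i → i ≤ d + s → mu i = 0) :
    ∀ P : Submodule ℂ E, Module.finrank ℂ P = d →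
      ((∀ i, 1 ≤ i → i ≤ d + s →
          i ≤ Module.finrank ℂ
            ↥((P.prod (⊤ : Submodule ℂ S)) ⊓ D (c + i - mu i))) ↔
        (∀ i, 1 ≤ i → i ≤ d →
          i ≤ Module.finrank ℂ ↥(P ⊓ F (c + i - mu i)))) := by
  intro P hP
  -- For i ≤ d, the rank condition downstairs matches the one upstairs.
  have key : ∀ i, 1 ≤ i → i ≤ d →
      Module.finrank ℂ ↥((P.prod (⊤ : Submodule ℂ S)) ⊓ D (c + i - mu i))
        = Module.finrank ℂ ↥(P ⊓ F (c + i - mu i)) := by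
    intro i h1 hid
    have hle : c + i - mu i ≤ N := by omega
    rw [hD1 _ hle, aux_prod_inf_prod, top_inf_eq, aux_finrank_prod, finrank_bot, add_zero]
  constructor
  · intro h i h1 hid
    rw [← key i h1 hid]
    exact h i h1 (by omega)
  · intro h i h1 his
    by_cases hid : i ≤ d
    · rw [key i h1 hid]; exact h i h1 hid
    · push_neg at hid
      have hmu : mu i = 0 := hmu0 i hid his
      have hNle : N ≤ c + i - mu i := by omega
      have hles : c + i - mu i ≤ N + s := by omega
      rw [hD2 _ hNle hles, aux_prod_inf_prod, inf_top_eq, top_inf_eq, aux_finrank_prod, hP,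
        hTrank _ (by omega)]
      omega
end

section
/- Let λ be a partition with c ≥ λ₁ ≥ ⋯ ≥ λ_d ≥ 0, E a vector space with basis e₁,…,e_N (N = c + d), L the standard flag L_k = span(e₁,…,e_k). For a c × d matrix A, let M_A be the N × d matrix obtained by interleaving the rows of A with the rows of the identity matrix I_d according to the lattice path of λ (the i-th row of I_d is inserted so that exactly c + i - λᵢ rows of M_A precede and include it), and let P = Im(M_A) ∈ G_d(E). Then for each 1 ≤ i ≤ d, the condition dim(P + L_{c+i-λᵢ}) ≤ N - λᵢ holds if and only if the submatrix of A formed by the first i columns and the last λᵢ rows is zero. -/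
/-- Number of identity rows inserted at or before (1-indexed) row `r` of `M_A`. -/
def numIns (c d : ℕ) (lam : ℕ → ℕ) (r : ℕ) : ℕ :=
  ((Finset.Icc 1 d).filter (fun i => c + i - lam i ≤ r)).card

/-- The interleaved matrix `M_A` (1-indexed entries): the `i`-th row of the
identity matrix `I_d` is placed as row `c + i - λᵢ`, and the rows of `A` fill
the remaining positions, in order. -/
def interleaved (c d : ℕ) (lam : ℕ → ℕ) (A : ℕ → ℕ → ℂ) (r j : ℕ) : ℂ :=
  if r ∈ (Finset.Icc 1 d).image (fun i => c + i - lam i) then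
    (if r = c + j - lam j then 1 else 0)
  else A (r - numIns c d lam r) j

/-- The column span `P = Im M_A ⊆ ℂ^N` (columns indexed by `1 ≤ j ≤ d`). -/
noncomputable def colSpan (N c d : ℕ) (lam : ℕ → ℕ) (A : ℕ → ℕ → ℂ) : Submodule ℂ (Fin N → ℂ) :=
  Submodule.span ℂ
    ((fun j => fun r : Fin N => interleaved c d lam A ((r : ℕ) + 1) j) ''
      {j | 1 ≤ j ∧ j ≤ d})

/-- The standard flag `L_k = span(e₁, …, e_k)` of `ℂ^N`. -/
noncomputable def stdFlag (N k : ℕ) : Submodule ℂ (Fin N → ℂ) :=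
  Submodule.span ℂ ((fun r : Fin N => (Pi.single r 1 : Fin N → ℂ)) '' {r | (r : ℕ) + 1 ≤ k})

/-!
Put `k = c + i - λᵢ`. The identity rows of columns `1, …, i` lie in rows `≤ k`, those of columns
`i + 1, …, d` in rows `> k`, and the remaining rows `> k` of `M_A` are exactly the last `λᵢ` rows
of `A`. Reading off the coordinates `< k` and the identity rows of columns `> i` shows that
`W = L_k + span(columns i + 1, …, d)` has dimension `N - λᵢ`; since `W ≤ P + L_k`, the dimension
condition holds iff the first `i` columns lie in `W`. The identity-row coordinates then force such
a column into `L_k`, i.e. to vanish on the last `λᵢ` rows of `A`.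
-/

structure PartitionInBox (c d : ℕ) (lam : ℕ → ℕ) : Prop where
  anti : ∀ i j, 1 ≤ i → i ≤ j → j ≤ d → lam j ≤ lam i
  le_width : ∀ i, 1 ≤ i → i ≤ d → lam i ≤ c

lemma le_card_filter_Icc_iff {d j : ℕ} {P : ℕ → Prop} [DecidablePred P]
    (hP : ∀ j j', 1 ≤ j → j ≤ j' → j' ≤ d → P j' → P j) (hj1 : 1 ≤ j) (hjd : j ≤ d) :
    j ≤ ((Finset.Icc 1 d).filter P).card ↔ P j := by
  constructor
  · intro hj
    by_contra hPj
    have hsub : (Finset.Icc 1 d).filter P ⊆ Finset.Icc 1 (j - 1) := by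
      intro j' hj'
      simp only [Finset.mem_filter, Finset.mem_Icc] at hj' ⊢
      refine ⟨hj'.1.1, Nat.le_sub_one_of_lt (lt_of_not_ge fun hjj' => hPj ?_)⟩
      exact hP j j' hj1 hjj' hj'.1.2 hj'.2
    have := Finset.card_le_card hsub
    rw [Nat.card_Icc] at this
    omega
  · intro hPj
    have hsub : Finset.Icc 1 j ⊆ (Finset.Icc 1 d).filter P := by
      intro j' hj'
      rw [Finset.mem_Icc] at hj'
      exact Finset.mem_filter.mpr
        ⟨Finset.mem_Icc.mpr ⟨hj'.1, hj'.2.trans hjd⟩, hP j' j hj'.1 hj'.2 hjd hPj⟩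
    simpa using Finset.card_le_card hsub

lemma numIns_le (c d : ℕ) (lam : ℕ → ℕ) (q : ℕ) : numIns c d lam q ≤ d :=
  (Finset.card_filter_le _ _).trans (by simp)

namespace PartitionInBox

variable {c d : ℕ} {lam : ℕ → ℕ} (hlam : PartitionInBox c d lam)
include hlam

lemma strictMonoOn_idRow : StrictMonoOn (fun j => c + j - lam j) (Set.Icc 1 d) := by
  intro j hj j' hj' hjj'
  have := hlam.anti j j' hj.1 hjj'.le hj'.2
  have := hlam.le_width j hj.1 hj.2
  dsimp only
  omega

lemma le_numIns_iff {q j : ℕ} (hj1 : 1 ≤ j) (hjd : j ≤ d) :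
    j ≤ numIns c d lam q ↔ c + j - lam j ≤ q :=
  le_card_filter_Icc_iff (fun _ _ h1 h2 h3 h =>
    (hlam.strictMonoOn_idRow.monotoneOn ⟨h1, h2.trans h3⟩ ⟨h1.trans h2, h3⟩ h2).trans h) hj1 hjd

lemma sub_numIns_mem_Ioc {i q : ℕ} (hi1 : 1 ≤ i) (hid : i ≤ d)
    (hiq : c + i - lam i < q) (hqN : q ≤ c + d) (hq : ∀ j, 1 ≤ j → j ≤ d → c + j - lam j ≠ q) :
    c - lam i < q - numIns c d lam q ∧ q - numIns c d lam q ≤ c := by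
  set m := numIns c d lam q
  have him : i ≤ m := (hlam.le_numIns_iff hi1 hid).mpr hiq.le
  have hmd : m ≤ d := numIns_le c d lam q
  have hmq : c + m - lam m < q :=
    ((hlam.le_numIns_iff (hi1.trans him) hmd).mp le_rfl).lt_of_ne (hq m (hi1.trans him) hmd)
  have := hlam.anti i m hi1 him hmd
  have := hlam.le_width m (hi1.trans him) hmd
  refine ⟨by omega, ?_⟩
  rcases hmd.lt_or_eq with hlt | hmd
  · have : q < c + (m + 1) - lam (m + 1) :=
      lt_of_not_ge fun h => by have := (hlam.le_numIns_iff (by omega) hlt).mpr h; omega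
    omega
  · omega

lemma exists_sub_numIns_eq {i r : ℕ} (hi1 : 1 ≤ i) (hid : i ≤ d)
    (hr1 : c - lam i < r) (hr2 : r ≤ c) :
    ∃ p, c + i - lam i < p ∧ p ≤ c + d ∧ (∀ j, 1 ≤ j → j ≤ d → c + j - lam j ≠ p) ∧
      p - numIns c d lam p = r := by
  set f := ((Finset.Icc 1 d).filter (fun j => c - lam j < r)).card
  have hf : ∀ j, 1 ≤ j → j ≤ d → (j ≤ f ↔ c - lam j < r) := fun j h1 h2 =>
    le_card_filter_Icc_iff (fun j j' h1 h2 h3 h => by have := hlam.anti j j' h1 h2 h3; omega) h1 h2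
  have hfd : f ≤ d := (Finset.card_filter_le _ _).trans (by simp)
  have hsep : ∀ j, 1 ≤ j → j ≤ d →
      (c + j - lam j < r + f ∧ c - lam j < r) ∨ (r + f < c + j - lam j ∧ r ≤ c - lam j) := by
    intro j h1 h2
    have := hf j h1 h2
    have := hlam.le_width j h1 h2
    omega
  have hnumIns : numIns c d lam (r + f) = f := by
    refine congrArg Finset.card (Finset.filter_congr fun j hj => ?_)
    rw [Finset.mem_Icc] at hj
    rcases hsep j hj.1 hj.2 with h | h <;> omega
  have := (hf i hi1 hid).mpr hr1
  refine ⟨r + f, by omega, by omega, fun j h1 h2 => ?_, by omega⟩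
  rcases hsep j h1 h2 with h | h <;> omega

end PartitionInBox

lemma LinearIndependent.of_apply_eq_single {R ι κ : Type*} [Semiring R] [DecidableEq ι]
    {v : ι → κ → R} (σ : ι → κ) (h : ∀ a b, v a (σ b) = Pi.single (M := fun _ => R) a 1 b) :
    LinearIndependent R v :=
  LinearIndependent.of_comp (LinearMap.funLeft R R σ) <| by
    convert Pi.linearIndependent_single_one ι R with a
    exact funext (h a)

lemma mem_stdFlag_iff {N k : ℕ} {v : Fin N → ℂ} :
    v ∈ stdFlag N k ↔ ∀ s : Fin N, k ≤ s → v s = 0 := by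
  have hbasis :
      stdFlag N k = Submodule.span ℂ (Pi.basisFun ℂ (Fin N) '' {r | (r : ℕ) + 1 ≤ k}) := by
    simp only [stdFlag, Pi.basisFun_apply]
  rw [hbasis, Module.Basis.mem_span_image]
  simp only [Set.subset_def, Finset.mem_coe, Finsupp.mem_support_iff, Pi.basisFun_repr,
    Set.mem_ofPred_eq]
  refine forall_congr' fun s => ⟨fun h hks => ?_, fun h hs => ?_⟩
  · by_contra hs
    have := h hs
    omega
  · by_contra hks
    exact hs (h (by omega))

lemma finrank_stdFlag_le (N k : ℕ) : Module.finrank ℂ (stdFlag N k) ≤ k := by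
  classical
  refine (finrank_span_le_card _).trans ?_
  rw [Set.toFinset_image]
  refine Finset.card_image_le.trans ?_
  have := Fin.card_filter_val_lt (n := N) (m := k)
  simp only [Set.toFinset_ofPred, Nat.add_one_le_iff]
  omega

def colVec (N c d : ℕ) (lam : ℕ → ℕ) (A : ℕ → ℕ → ℂ) (j : ℕ) : Fin N → ℂ :=
  fun s => interleaved c d lam A (s + 1) j

-- The 0-based coordinate carrying the identity entry of column `j`.
def tailIdRow (c d : ℕ) (lam : ℕ → ℕ) (i : ℕ) (j : Finset.Ioc i d) : Fin (c + d) :=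
  ⟨c + j - lam j - 1, by have := Finset.mem_Ioc.mp j.2; omega⟩

noncomputable def tailSpan (c d : ℕ) (lam : ℕ → ℕ) (A : ℕ → ℕ → ℂ) (i : ℕ) :
    Submodule ℂ (Fin (c + d) → ℂ) :=
  Submodule.span ℂ (Set.range fun j : Finset.Ioc i d => colVec (c + d) c d lam A j)

lemma interleaved_idRow (c d : ℕ) (lam : ℕ → ℕ) (A : ℕ → ℕ → ℂ) {j' : ℕ} (h1 : 1 ≤ j')
    (h2 : j' ≤ d) (j : ℕ) :
    interleaved c d lam A (c + j' - lam j') j = if c + j' - lam j' = c + j - lam j then 1 else 0 :=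
  if_pos (Finset.mem_image_of_mem _ (Finset.mem_Icc.mpr ⟨h1, h2⟩))

lemma interleaved_of_forall_ne (c d : ℕ) (lam : ℕ → ℕ) (A : ℕ → ℕ → ℂ) {q : ℕ}
    (hq : ∀ j', 1 ≤ j' → j' ≤ d → c + j' - lam j' ≠ q) (j : ℕ) :
    interleaved c d lam A q j = A (q - numIns c d lam q) j := by
  refine if_neg fun hmem => ?_
  obtain ⟨j', hj', hj'q⟩ := Finset.mem_image.mp hmem
  exact hq j' (Finset.mem_Icc.mp hj').1 (Finset.mem_Icc.mp hj').2 hj'q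

lemma finrank_tailSpan_le (c d : ℕ) (lam : ℕ → ℕ) (A : ℕ → ℕ → ℂ) (i : ℕ) :
    Module.finrank ℂ (tailSpan c d lam A i) ≤ d - i :=
  (finrank_range_le_card _).trans (by simp)

lemma stdFlag_sup_tailSpan_le (c d : ℕ) (lam : ℕ → ℕ) (A : ℕ → ℕ → ℂ) (i k : ℕ) :
    stdFlag (c + d) k ⊔ tailSpan c d lam A i ≤ colSpan (c + d) c d lam A ⊔ stdFlag (c + d) k := by
  refine sup_le le_sup_right (le_sup_of_le_left (Submodule.span_mono ?_))
  rintro _ ⟨j, rfl⟩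
  have := Finset.mem_Ioc.mp j.2
  exact ⟨j, ⟨by omega, this.2⟩, rfl⟩

lemma colSpan_sup_stdFlag_le {c d : ℕ} {lam : ℕ → ℕ} {A : ℕ → ℕ → ℂ} {i k : ℕ}
    (h : ∀ j, 1 ≤ j → j ≤ i → colVec (c + d) c d lam A j ∈ stdFlag (c + d) k) :
    colSpan (c + d) c d lam A ⊔ stdFlag (c + d) k ≤ stdFlag (c + d) k ⊔ tailSpan c d lam A i := by
  refine sup_le (Submodule.span_le.mpr ?_) le_sup_left
  rintro _ ⟨j, ⟨hj1, hjd⟩, rfl⟩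
  by_cases hji : j ≤ i
  · exact Submodule.mem_sup_left (h j hj1 hji)
  · exact Submodule.mem_sup_right
      (Submodule.subset_span ⟨⟨j, Finset.mem_Ioc.mpr ⟨by omega, hjd⟩⟩, rfl⟩)

namespace PartitionInBox

variable {c d : ℕ} {lam : ℕ → ℕ} (hlam : PartitionInBox c d lam) {A : ℕ → ℕ → ℂ} {i : ℕ}
include hlam

lemma le_tailIdRow (hi1 : 1 ≤ i) (j : Finset.Ioc i d) :
    c + i - lam i ≤ tailIdRow c d lam i j := by
  have hj := Finset.mem_Ioc.mp j.2
  have := hlam.strictMonoOn_idRow ⟨hi1, hj.1.le.trans hj.2⟩ ⟨by omega, hj.2⟩ hj.1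
  simp only [tailIdRow] at this ⊢
  omega

lemma colVec_tailIdRow {j : ℕ} (hj1 : 1 ≤ j) (hjd : j ≤ d) (j' : Finset.Ioc i d) :
    colVec (c + d) c d lam A j (tailIdRow c d lam i j') = if j = j' then 1 else 0 := by
  have hj' := Finset.mem_Ioc.mp j'.2
  have := hlam.le_width j' (by omega) hj'.2
  have hpos : (tailIdRow c d lam i j' : ℕ) + 1 = c + j' - lam j' := by
    simp only [tailIdRow]
    omega
  simp only [colVec, hpos, interleaved_idRow c d lam A (by omega : 1 ≤ (j' : ℕ)) hj'.2]
  exact if_congr ⟨fun h => (hlam.strictMonoOn_idRow.injOn ⟨hj1, hjd⟩ ⟨by omega, hj'.2⟩ h.symm),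
    fun h => h ▸ rfl⟩ rfl rfl

lemma le_finrank_stdFlag_sup_tailSpan (hi1 : 1 ≤ i) (hid : i ≤ d) :
    c + d - lam i ≤
      Module.finrank ℂ ↥(stdFlag (c + d) (c + i - lam i) ⊔ tailSpan c d lam A i) := by
  set k := c + i - lam i
  have hk : k ≤ c + d := by omega
  -- `e_s` for `s < k`, and the columns `j > i` with their coordinates `< k` set to zero:
  -- unitriangular in the coordinates `s < k` and `tailIdRow j`.
  set v : Fin k ⊕ Finset.Ioc i d → Fin (c + d) → ℂ := Sum.elim
    (fun s => Pi.single (Fin.castLE hk s) 1)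
    (fun j t => if k ≤ t then colVec (c + d) c d lam A j t else 0)
  have hv : LinearIndependent ℂ v := by
    refine .of_apply_eq_single (Sum.elim (Fin.castLE hk) (tailIdRow c d lam i)) ?_
    rintro (s | j) (s' | j')
    · simp [v, Pi.single_apply]
    · have : k ≤ tailIdRow c d lam i j' := hlam.le_tailIdRow hi1 j'
      have := s.isLt
      simp only [v, Sum.elim_inl, Sum.elim_inr, Pi.single_apply, Fin.ext_iff, Fin.val_castLE,
        reduceCtorEq, if_false, ite_eq_right_iff, one_ne_zero, imp_false]
      omega
    · simp [v]
    · have : k ≤ tailIdRow c d lam i j' := hlam.le_tailIdRow hi1 j'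
      have hj := Finset.mem_Ioc.mp j.2
      simp [v, this, hlam.colVec_tailIdRow (by omega : 1 ≤ (j : ℕ)) hj.2, Pi.single_apply,
        eq_comm]
  have hspan : Submodule.span ℂ (Set.range v) ≤ stdFlag (c + d) k ⊔ tailSpan c d lam A i := by
    rw [Submodule.span_le]
    rintro _ ⟨s | j, rfl⟩
    · refine Submodule.mem_sup_left (mem_stdFlag_iff.mpr fun t ht => ?_)
      have := s.isLt
      simp only [v, Sum.elim_inl, Pi.single_apply, Fin.ext_iff, Fin.val_castLE, ite_eq_right_iff,
        one_ne_zero, imp_false]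
      omega
    · have hcol : colVec (c + d) c d lam A j ∈ tailSpan c d lam A i :=
        Submodule.subset_span ⟨j, rfl⟩
      have hlow : colVec (c + d) c d lam A j - v (.inr j) ∈ stdFlag (c + d) k :=
        mem_stdFlag_iff.mpr fun t ht => by simp [v, ht]
      simpa using Submodule.sub_mem _ (Submodule.mem_sup_right hcol) (Submodule.mem_sup_left hlow)
  have := hlam.le_width i hi1 hid
  calc c + d - lam i = Fintype.card (Fin k ⊕ Finset.Ioc i d) := by
        simp only [Fintype.card_sum, Fintype.card_fin, Fintype.card_coe, Nat.card_Ioc]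
        omega
    _ = Module.finrank ℂ (Submodule.span ℂ (Set.range v)) := (finrank_span_eq_card hv).symm
    _ ≤ _ := Submodule.finrank_mono hspan

lemma mem_stdFlag_of_mem_sup_tailSpan (hi1 : 1 ≤ i) {v : Fin (c + d) → ℂ}
    (hv : v ∈ stdFlag (c + d) (c + i - lam i) ⊔ tailSpan c d lam A i)
    (hvanish : ∀ j, v (tailIdRow c d lam i j) = 0) :
    v ∈ stdFlag (c + d) (c + i - lam i) := by
  obtain ⟨w, hw, u, hu, rfl⟩ := Submodule.mem_sup.mp hv
  obtain ⟨a, rfl⟩ := (Submodule.mem_span_range_iff_exists_fun ℂ).mp hu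
  have hcol : ∀ x j : Finset.Ioc i d,
      colVec (c + d) c d lam A x (tailIdRow c d lam i j) = if (x : ℕ) = j then 1 else 0 :=
    fun x => have hx := Finset.mem_Ioc.mp x.2; hlam.colVec_tailIdRow (by omega) hx.2
  have ha : ∀ j, a j = 0 := fun j => by
    simpa [mem_stdFlag_iff.mp hw _ (hlam.le_tailIdRow hi1 j), Finset.sum_apply, hcol]
      using hvanish j
  simpa [ha] using hw

lemma colVec_mem_stdFlag_iff (hi1 : 1 ≤ i) (hid : i ≤ d) {j : ℕ} (hj1 : 1 ≤ j) (hji : j ≤ i) :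
    colVec (c + d) c d lam A j ∈ stdFlag (c + d) (c + i - lam i) ↔
      ∀ r, c - lam i < r → r ≤ c → A r j = 0 := by
  rw [mem_stdFlag_iff]
  constructor
  · intro h r hr1 hr2
    obtain ⟨p, hip, hpN, hp, rfl⟩ := hlam.exists_sub_numIns_eq hi1 hid hr1 hr2
    have := h ⟨p - 1, by omega⟩ (by show c + i - lam i ≤ p - 1; omega)
    simpa [colVec, Nat.sub_add_cancel (by omega : 1 ≤ p), interleaved_of_forall_ne c d lam A hp]
      using this
  · intro hA s hs
    by_cases hid_row : ∃ j', 1 ≤ j' ∧ j' ≤ d ∧ c + j' - lam j' = s + 1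
    · obtain ⟨j', hj'1, hj'd, hj's⟩ := hid_row
      have := hlam.strictMonoOn_idRow.monotoneOn ⟨hj1, hji.trans hid⟩ ⟨hi1, hid⟩ hji
      simp only [colVec, ← hj's, interleaved_idRow c d lam A hj'1 hj'd]
      exact if_neg (by omega)
    · push Not at hid_row
      have hrow := hlam.sub_numIns_mem_Ioc hi1 hid (by omega) (by omega) hid_row
      simp only [colVec, interleaved_of_forall_ne c d lam A hid_row]
      exact hA _ hrow.1 hrow.2

end PartitionInBox

/-- Lemma 1: for `P = Im M_A` and `1 ≤ i ≤ d`, the condition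
`dim(P + L_{c+i-λᵢ}) ≤ N - λᵢ` holds iff the submatrix of `A` formed by the
first `i` columns and the last `λᵢ` rows vanishes. -/
theorem stmt_14 (N c d : ℕ) (hN : N = c + d)
    (lam : ℕ → ℕ) (hlam_anti : ∀ i j, 1 ≤ i → i ≤ j → j ≤ d → lam j ≤ lam i)
    (hlam_le : ∀ i, 1 ≤ i → i ≤ d → lam i ≤ c)
    (A : ℕ → ℕ → ℂ) (i : ℕ) (hi1 : 1 ≤ i) (hid : i ≤ d) :
    Module.finrank ℂ ↥(colSpan N c d lam A ⊔ stdFlag N (c + i - lam i)) ≤ N - lam i ↔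
      (∀ j r, 1 ≤ j → j ≤ i → c - lam i < r → r ≤ c → A r j = 0) := by
  subst hN
  have hlam : PartitionInBox c d lam := ⟨hlam_anti, hlam_le⟩
  constructor
  · intro hdim j r hj1 hji
    have hsup : stdFlag (c + d) (c + i - lam i) ⊔ tailSpan c d lam A i =
        colSpan (c + d) c d lam A ⊔ stdFlag (c + d) (c + i - lam i) :=
      Submodule.eq_of_le_of_finrank_le (stdFlag_sup_tailSpan_le c d lam A i _)
        (hdim.trans (hlam.le_finrank_stdFlag_sup_tailSpan hi1 hid))
    have hcol :
        colVec (c + d) c d lam A j ∈ stdFlag (c + d) (c + i - lam i) ⊔ tailSpan c d lam A i :=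
      hsup ▸ Submodule.mem_sup_left (Submodule.subset_span ⟨j, ⟨hj1, hji.trans hid⟩, rfl⟩)
    refine (hlam.colVec_mem_stdFlag_iff hi1 hid hj1 hji).mp
      (hlam.mem_stdFlag_of_mem_sup_tailSpan hi1 hcol fun j' => ?_) r
    rw [hlam.colVec_tailIdRow hj1 (hji.trans hid), if_neg]
    have := (Finset.mem_Ioc.mp j'.2).1
    omega
  · intro hA
    have hi := hlam_le i hi1 hid
    calc Module.finrank ℂ ↥(colSpan (c + d) c d lam A ⊔ stdFlag (c + d) (c + i - lam i))
        ≤ Module.finrank ℂ ↥(stdFlag (c + d) (c + i - lam i) ⊔ tailSpan c d lam A i) :=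
          Submodule.finrank_mono (colSpan_sup_stdFlag_le fun j hj1 hji =>
            (hlam.colVec_mem_stdFlag_iff hi1 hid hj1 hji).mpr (hA j · hj1 hji))
      _ ≤ (c + i - lam i) + (d - i) :=
          (Submodule.finrank_add_le_finrank_add_finrank _ _).trans
            (add_le_add (finrank_stdFlag_le _ _) (finrank_tailSpan_le c d lam A i))
      _ = c + d - lam i := by omega
end

section
/- With notation as in the previous statement, the intersection Ω_λ(L) ∩ U^λ corresponds, under the chart A ↦ Im(M_A), exactly to the set of matrices A ∈ M_{c×d} whose entries in positions (j, i) with j > c - λᵢ (i.e. the entries inside the rotated Young diagram λ^rot) vanish. In particular Ω_λ(L) ∩ U^λ is a linear subspace of the chart of codimension |λ| = λ₁ + ⋯ + λ_d, so Ω_λ(L) has codimension |λ| in G_d(E). -/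
/-!
The column `i` of `M_A` has its pivot, a unit entry alone in its row, in row `kᵢ = c + i - λᵢ`,
and `kᵢ` is strictly increasing. So `x ↦ M_A x` is injective and pulls `L_{kᵢ}` back into
`span(e₁, …, eᵢ)`; hence `dim(P ∩ L_{kᵢ}) ≥ i` iff the first `i` columns of `M_A` vanish below
row `kᵢ`, and over all `i` this says that each column `j` vanishes below row `kⱼ`. There the pivot
rows contribute zeros, and the remaining rows are exactly the rows `r` of `A` with
`c - λⱼ < r ≤ c`, row `r` of `A` sitting in row `r + #{i | c - λᵢ < r}` of `M_A`.
-/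

open Module Matrix

theorem le_card_filter_Icc_iff_s15 {d i : ℕ} {p : ℕ → Prop} [DecidablePred p]
    (hp : ∀ i j, 1 ≤ i → i ≤ j → j ≤ d → p j → p i) (hi : 1 ≤ i) (hid : i ≤ d) :
    i ≤ ((Finset.Icc 1 d).filter p).card ↔ p i := by
  constructor
  · intro hcard
    by_contra hpi
    have hsub : (Finset.Icc 1 d).filter p ⊆ Finset.Icc 1 (i - 1) := by
      intro j hj
      simp only [Finset.mem_filter, Finset.mem_Icc] at hj ⊢
      by_contra hji
      exact hpi (hp i j hi (by omega) hj.1.2 hj.2)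
    have := Finset.card_le_card hsub
    rw [Nat.card_Icc] at this
    omega
  · intro hpi
    have hsub : Finset.Icc 1 i ⊆ (Finset.Icc 1 d).filter p := by
      intro j hj
      simp only [Finset.mem_filter, Finset.mem_Icc] at hj ⊢
      exact ⟨⟨hj.1, hj.2.trans hid⟩, hp j i hj.1 hj.2 hid hpi⟩
    simpa using Finset.card_le_card hsub

theorem le_finrank_range_inf_iff {K V W : Type*} [Field K] [AddCommGroup V] [Module K V]
    [FiniteDimensional K V] [AddCommGroup W] [Module K W] {f : V →ₗ[K] W}
    (hf : Function.Injective f) {S : Submodule K W} {U : Submodule K V}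
    (hU : S.comap f ≤ U) :
    finrank K U ≤ finrank K ↥(LinearMap.range f ⊓ S) ↔ U ≤ S.comap f := by
  rw [← Submodule.map_comap_eq, ← (Submodule.equivMapOfInjective f hf _).finrank_eq]
  exact ⟨fun h => (Submodule.eq_of_le_of_finrank_le hU h).ge, Submodule.finrank_mono⟩

theorem mem_stdFlag {N k : ℕ} {v : Fin N → ℂ} :
    v ∈ stdFlag N k ↔ ∀ r : Fin N, k ≤ (r : ℕ) → v r = 0 := by
  have hbasis : (fun r : Fin N => (Pi.single r 1 : Fin N → ℂ)) = Pi.basisFun ℂ (Fin N) := by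
    ext r; simp
  rw [stdFlag, hbasis, Basis.mem_span_image]
  simp only [Set.subset_def, Finset.mem_coe, Finsupp.mem_support_iff, Pi.basisFun_repr,
    Set.mem_ofPred_eq]
  refine forall_congr' fun r => ?_
  rw [← not_imp_not, not_not, not_le]
  exact imp_congr_left (by omega)

theorem finrank_stdFlag {N k : ℕ} (hk : k ≤ N) : finrank ℂ (stdFlag N k) = k := by
  have hli : LinearIndependent ℂ fun m : Fin k => (Pi.single (Fin.castLE hk m) 1 : Fin N → ℂ) :=
    by simpa [Function.comp_def] using
      (Pi.basisFun ℂ (Fin N)).linearIndependent.comp _ (Fin.castLE_injective hk)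
  have hrange : (fun r : Fin N => (Pi.single r 1 : Fin N → ℂ)) '' {r | (r : ℕ) + 1 ≤ k} =
      Set.range fun m : Fin k => (Pi.single (Fin.castLE hk m) 1 : Fin N → ℂ) := by
    ext v
    constructor
    · rintro ⟨r, hr, rfl⟩
      exact ⟨⟨r, hr⟩, rfl⟩
    · rintro ⟨m, rfl⟩
      exact ⟨Fin.castLE hk m, m.isLt, rfl⟩
  rw [stdFlag, hrange, finrank_span_eq_card hli, Fintype.card_fin]

theorem stdFlag_le_iff {N k : ℕ} {S : Submodule ℂ (Fin N → ℂ)} :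
    stdFlag N k ≤ S ↔ ∀ r : Fin N, (r : ℕ) < k → Pi.single r 1 ∈ S := by
  rw [stdFlag, Submodule.span_le, Set.image_subset_iff]
  rfl

structure IsBoxPartition (c d : ℕ) (lam : ℕ → ℕ) : Prop where
  antitone : ∀ i j, 1 ≤ i → i ≤ j → j ≤ d → lam j ≤ lam i
  le : ∀ i, 1 ≤ i → i ≤ d → lam i ≤ c

/-- The row of `M_A` holding row `r` of `A`: it is preceded by one identity row for each `i`
with `c - λᵢ < r`. -/
def rowOfA (c d : ℕ) (lam : ℕ → ℕ) (r : ℕ) : ℕ :=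
  r + ((Finset.Icc 1 d).filter fun i => c - lam i < r).card

theorem rowOfA_le_add {c d : ℕ} {lam : ℕ → ℕ} {r : ℕ} (hr : r ≤ c) :
    rowOfA c d lam r ≤ c + d := by
  have := Finset.card_filter_le (Finset.Icc 1 d) fun i => c - lam i < r
  simp only [Nat.card_Icc] at this
  unfold rowOfA
  omega

/-- The matrix `M_A`, indexed from `0`. -/
def chartMatrix (N c d : ℕ) (lam : ℕ → ℕ) (A : ℕ → ℕ → ℂ) : Matrix (Fin N) (Fin d) ℂ :=
  Matrix.of fun r m => interleaved c d lam A (r + 1) (m + 1)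

theorem colSpan_eq_range_mulVecLin (N c d : ℕ) (lam : ℕ → ℕ) (A : ℕ → ℕ → ℂ) :
    colSpan N c d lam A = LinearMap.range (chartMatrix N c d lam A).mulVecLin := by
  rw [Matrix.range_mulVecLin, colSpan]
  congr 1
  ext v
  constructor
  · rintro ⟨j, ⟨hj, hjd⟩, rfl⟩
    refine ⟨⟨j - 1, by omega⟩, funext fun r => ?_⟩
    simp only [chartMatrix, Matrix.col_apply, Matrix.of_apply]
    congr
    omega
  · rintro ⟨m, rfl⟩
    exact ⟨m + 1, ⟨by omega, m.isLt⟩, rfl⟩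

theorem col_chartMatrix_mem_stdFlag_iff {N c d k : ℕ} {lam : ℕ → ℕ} {A : ℕ → ℕ → ℂ}
    (m : Fin d) : (chartMatrix N c d lam A).col m ∈ stdFlag N k ↔
      ∀ q, k < q → q ≤ N → interleaved c d lam A q (m + 1) = 0 := by
  rw [mem_stdFlag]
  constructor
  · intro h q hkq hqN
    have := h ⟨q - 1, by omega⟩ (by simp; omega)
    simp only [chartMatrix, Matrix.col_apply, Matrix.of_apply] at this
    rwa [Nat.sub_add_cancel (by omega : 1 ≤ q)] at this
  · intro h r hkr
    exact h (r + 1) (by omega) r.isLt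

namespace IsBoxPartition

variable {c d : ℕ} {lam : ℕ → ℕ}

theorem sub_mono (hlam : IsBoxPartition c d lam) {i j : ℕ} (hi : 1 ≤ i) (hij : i ≤ j)
    (hjd : j ≤ d) : c - lam i ≤ c - lam j := by
  have := hlam.antitone i j hi hij hjd
  omega

theorem pivot_lt (hlam : IsBoxPartition c d lam) {i j : ℕ} (hi : 1 ≤ i) (hij : i < j)
    (hjd : j ≤ d) : c + i - lam i < c + j - lam j := by
  have := hlam.antitone i j hi hij.le hjd
  have := hlam.le i hi (by omega)
  omega

theorem pivot_le (hlam : IsBoxPartition c d lam) {i j : ℕ} (hi : 1 ≤ i) (hij : i ≤ j)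
    (hjd : j ≤ d) : c + i - lam i ≤ c + j - lam j := by
  rcases hij.lt_or_eq with hij | rfl
  · exact (hlam.pivot_lt hi hij hjd).le
  · rfl

theorem le_numIns_iff (hlam : IsBoxPartition c d lam) {i q : ℕ} (hi : 1 ≤ i) (hid : i ≤ d) :
    i ≤ numIns c d lam q ↔ c + i - lam i ≤ q :=
  le_card_filter_Icc_iff_s15 (fun _ _ hi hij hjd h => (hlam.pivot_le hi hij hjd).trans h) hi hid

theorem le_card_sub_lt_iff (hlam : IsBoxPartition c d lam) {i r : ℕ} (hi : 1 ≤ i) (hid : i ≤ d) :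
    i ≤ ((Finset.Icc 1 d).filter fun i => c - lam i < r).card ↔ c - lam i < r :=
  le_card_filter_Icc_iff_s15 (fun _ _ hi hij hjd h => (hlam.sub_mono hi hij hjd).trans_lt h) hi hid

theorem pivot_lt_rowOfA (hlam : IsBoxPartition c d lam) {i r : ℕ} (hi : 1 ≤ i) (hid : i ≤ d)
    (hr : c - lam i < r) : c + i - lam i < rowOfA c d lam r := by
  have := (hlam.le_card_sub_lt_iff hi hid).2 hr
  have := hlam.le i hi hid
  unfold rowOfA
  omega

theorem rowOfA_lt_pivot (hlam : IsBoxPartition c d lam) {i r : ℕ} (hi : 1 ≤ i) (hid : i ≤ d)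
    (hr : r ≤ c - lam i) : rowOfA c d lam r < c + i - lam i := by
  have := mt (hlam.le_card_sub_lt_iff (r := r) hi hid).1 (by omega)
  have := hlam.le i hi hid
  unfold rowOfA
  omega

theorem pivot_lt_rowOfA_iff (hlam : IsBoxPartition c d lam) {i r : ℕ} (hi : 1 ≤ i)
    (hid : i ≤ d) : c + i - lam i < rowOfA c d lam r ↔ c - lam i < r := by
  refine ⟨fun h => ?_, hlam.pivot_lt_rowOfA hi hid⟩
  by_contra hr
  exact (hlam.rowOfA_lt_pivot hi hid (not_lt.1 hr)).not_gt h

theorem rowOfA_not_mem_pivots (hlam : IsBoxPartition c d lam) (r : ℕ) :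
    rowOfA c d lam r ∉ (Finset.Icc 1 d).image fun i => c + i - lam i := by
  rintro hmem
  obtain ⟨i, hi, hpiv⟩ := Finset.mem_image.1 hmem
  obtain ⟨hi, hid⟩ := Finset.mem_Icc.1 hi
  rcases lt_or_ge (c - lam i) r with hr | hr
  · exact (hlam.pivot_lt_rowOfA hi hid hr).ne hpiv
  · exact (hlam.rowOfA_lt_pivot hi hid hr).ne' hpiv

theorem numIns_rowOfA (hlam : IsBoxPartition c d lam) (r : ℕ) :
    numIns c d lam (rowOfA c d lam r) = ((Finset.Icc 1 d).filter fun i => c - lam i < r).card := by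
  unfold numIns
  congr 1
  refine Finset.filter_congr fun i hi => ?_
  obtain ⟨hi, hid⟩ := Finset.mem_Icc.1 hi
  rw [← hlam.pivot_lt_rowOfA_iff hi hid, le_iff_lt_or_eq, or_iff_left]
  exact fun h => hlam.rowOfA_not_mem_pivots r (Finset.mem_image.2 ⟨i, by simp [hi, hid], h⟩)

theorem interleaved_rowOfA (hlam : IsBoxPartition c d lam) (A : ℕ → ℕ → ℂ) (r j : ℕ) :
    interleaved c d lam A (rowOfA c d lam r) j = A r j := by
  rw [interleaved, if_neg (hlam.rowOfA_not_mem_pivots r), hlam.numIns_rowOfA]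
  simp [rowOfA]

theorem pivot_le_iff_of_not_mem (hlam : IsBoxPartition c d lam) {i q : ℕ} (hi : 1 ≤ i)
    (hid : i ≤ d) (hq : q ∉ (Finset.Icc 1 d).image fun i => c + i - lam i) :
    c + i - lam i ≤ q ↔ c - lam i < q - numIns c d lam q := by
  set n := numIns c d lam q
  have hpiv : ∀ i, 1 ≤ i → i ≤ d → c + i - lam i ≠ q := fun i hi hid h =>
    hq (Finset.mem_image.2 ⟨i, Finset.mem_Icc.2 ⟨hi, hid⟩, h⟩)
  constructor
  · intro hiq
    have hin : i ≤ n := (hlam.le_numIns_iff hi hid).2 hiq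
    have hnd : n ≤ d := (Finset.card_filter_le _ _).trans (by simp)
    have hnq := (hlam.le_numIns_iff (q := q) (hi.trans hin) hnd).1 le_rfl
    have := hpiv n (hi.trans hin) hnd
    have := hlam.sub_mono hi hin hnd
    have := hlam.le n (hi.trans hin) hnd
    omega
  · intro hiq
    by_contra hqi
    have hni : ¬ i ≤ n := mt (hlam.le_numIns_iff hi hid).1 hqi
    have hsucc := mt (hlam.le_numIns_iff (q := q) (i := n + 1) (by omega) (by omega)).2 (by omega)
    have := hlam.sub_mono (i := n + 1) (by omega) (by omega) hid
    have := hlam.le (n + 1) (by omega) (by omega)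
    omega

theorem exists_rowOfA_eq (hlam : IsBoxPartition c d lam) {q : ℕ} (hqN : q ≤ c + d)
    (hq : q ∉ (Finset.Icc 1 d).image fun i => c + i - lam i) :
    ∃ r ≤ c, rowOfA c d lam r = q := by
  set n := numIns c d lam q
  have hnd : n ≤ d := (Finset.card_filter_le _ _).trans (by simp)
  have hcount : ((Finset.Icc 1 d).filter fun i => c - lam i < q - n).card = n :=
    congrArg Finset.card <| Finset.filter_congr fun i hi => by
      obtain ⟨hi, hid⟩ := Finset.mem_Icc.1 hi
      exact (hlam.pivot_le_iff_of_not_mem hi hid hq).symm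
  refine ⟨q - n, ?_, ?_⟩
  · rcases hnd.lt_or_eq with hnd | hnd
    · have := mt (hlam.le_numIns_iff (q := q) (i := n + 1) (by omega) hnd).2 (by omega)
      omega
    · omega
  · have : n ≤ q := by
      rcases Nat.eq_zero_or_pos n with hn | hn
      · omega
      · have := (hlam.le_numIns_iff (q := q) hn hnd).1 le_rfl
        have := hlam.le n hn hnd
        omega
    rw [rowOfA, hcount]
    omega

theorem interleaved_below_pivot_eq_zero_iff (hlam : IsBoxPartition c d lam) (A : ℕ → ℕ → ℂ)
    {j : ℕ} (hj : 1 ≤ j) (hjd : j ≤ d) :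
    (∀ q, c + j - lam j < q → q ≤ c + d → interleaved c d lam A q j = 0) ↔
      ∀ r, c - lam j < r → r ≤ c → A r j = 0 := by
  constructor
  · intro h r hjr hrc
    rw [← hlam.interleaved_rowOfA A]
    exact h _ (hlam.pivot_lt_rowOfA hj hjd hjr) (rowOfA_le_add hrc)
  · intro h q hjq hqN
    by_cases hq : q ∈ (Finset.Icc 1 d).image fun i => c + i - lam i
    · rw [interleaved, if_pos hq, if_neg hjq.ne']
    · obtain ⟨r, hrc, rfl⟩ := hlam.exists_rowOfA_eq hqN hq
      rw [hlam.interleaved_rowOfA]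
      exact h r ((hlam.pivot_lt_rowOfA_iff hj hjd).1 hjq) hrc

theorem interleaved_pivot (hlam : IsBoxPartition c d lam) (A : ℕ → ℕ → ℂ) {i j : ℕ}
    (hi : 1 ≤ i) (hid : i ≤ d) (hj : 1 ≤ j) (hjd : j ≤ d) :
    interleaved c d lam A (c + i - lam i) j = if i = j then 1 else 0 := by
  rw [interleaved, if_pos (Finset.mem_image_of_mem _ (Finset.mem_Icc.2 ⟨hi, hid⟩))]
  congr 1
  apply propext
  constructor
  · intro h
    by_contra hij
    rcases Nat.lt_or_gt_of_ne hij with hij | hij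
    · exact (hlam.pivot_lt hi hij hjd).ne h
    · exact (hlam.pivot_lt hj hij hid).ne' h
  · rintro rfl
    rfl

theorem exists_mulVec_chartMatrix_eq (hlam : IsBoxPartition c d lam) {N : ℕ} (hN : N = c + d)
    (A : ℕ → ℕ → ℂ) (m : Fin d) :
    ∃ p : Fin N, c + (m + 1) - lam (m + 1) = p + 1 ∧
      ∀ x, (chartMatrix N c d lam A *ᵥ x) p = x m := by
  have := hlam.le (m + 1) (by omega) (by omega)
  refine ⟨⟨c + (m + 1) - lam (m + 1) - 1, by omega⟩, by simp; omega, fun x => ?_⟩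
  have hrow : (fun m' => chartMatrix N c d lam A ⟨c + (m + 1) - lam (m + 1) - 1, by omega⟩ m') =
      Pi.single m 1 := by
    ext m'
    simp only [chartMatrix, Matrix.of_apply]
    rw [show c + (m + 1) - lam (m + 1) - 1 + 1 = c + (m + 1) - lam (m + 1) by omega,
      hlam.interleaved_pivot A (by omega) (by omega) (by omega) (by omega)]
    simp [Pi.single_apply, Fin.ext_iff, eq_comm]
  rw [Matrix.mulVec, hrow, single_dotProduct, one_mul]

theorem injective_mulVecLin_chartMatrix (hlam : IsBoxPartition c d lam) {N : ℕ}
    (hN : N = c + d) (A : ℕ → ℕ → ℂ) :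
    Function.Injective (chartMatrix N c d lam A).mulVecLin := by
  rw [← LinearMap.ker_eq_bot, Submodule.eq_bot_iff]
  intro x hx
  funext m
  obtain ⟨p, -, hp⟩ := hlam.exists_mulVec_chartMatrix_eq hN A m
  rw [← hp x, ← Matrix.mulVecLin_apply, LinearMap.mem_ker.1 hx]
  rfl

theorem comap_stdFlag_le (hlam : IsBoxPartition c d lam) {N : ℕ} (hN : N = c + d)
    (A : ℕ → ℕ → ℂ) {j : ℕ} (hj : 1 ≤ j) :
    (stdFlag N (c + j - lam j)).comap (chartMatrix N c d lam A).mulVecLin ≤ stdFlag d j := by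
  intro x hx
  rw [Submodule.mem_comap, mem_stdFlag] at hx
  rw [mem_stdFlag]
  intro m hjm
  obtain ⟨p, hpm, hp⟩ := hlam.exists_mulVec_chartMatrix_eq hN A m
  rw [← hp x]
  exact hx p (by have := hlam.pivot_lt hj (by omega : j < m + 1) (by omega); omega)

theorem le_finrank_colSpan_inf_iff (hlam : IsBoxPartition c d lam) {N : ℕ} (hN : N = c + d)
    (A : ℕ → ℕ → ℂ) {i : ℕ} (hi : 1 ≤ i) (hid : i ≤ d) :
    i ≤ Module.finrank ℂ ↥(colSpan N c d lam A ⊓ stdFlag N (c + i - lam i)) ↔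
      ∀ j, 1 ≤ j → j ≤ i → ∀ q, c + i - lam i < q → q ≤ N → interleaved c d lam A q j = 0 := by
  have key := le_finrank_range_inf_iff (hlam.injective_mulVecLin_chartMatrix hN A)
    (hlam.comap_stdFlag_le hN A hi)
  rw [finrank_stdFlag hid, ← colSpan_eq_range_mulVecLin, stdFlag_le_iff] at key
  rw [key]
  simp only [Submodule.mem_comap, Matrix.mulVecLin_apply, Matrix.mulVec_single_one,
    col_chartMatrix_mem_stdFlag_iff]
  constructor
  · intro h j hj hji
    simpa [Nat.sub_add_cancel hj] using h ⟨j - 1, by omega⟩ (by simp; omega)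
  · intro h m hmi
    exact h (m + 1) (by omega) hmi

end IsBoxPartition

theorem card_filter_sub_lt_eq_sum {c d : ℕ} {lam : ℕ → ℕ}
    (hle : ∀ i, 1 ≤ i → i ≤ d → lam i ≤ c) :
    ((Finset.Icc 1 c ×ˢ Finset.Icc 1 d).filter fun p => c - lam p.2 < p.1).card =
      ∑ i ∈ Finset.Icc 1 d, lam i := by
  rw [Finset.card_filter, Finset.sum_product_right]
  refine Finset.sum_congr rfl fun i hi => ?_
  obtain ⟨hi, hid⟩ := Finset.mem_Icc.1 hi
  have hcol : (Finset.Icc 1 c).filter (fun r => c - lam i < r) = Finset.Ioc (c - lam i) c := by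
    ext r
    simp only [Finset.mem_filter, Finset.mem_Icc, Finset.mem_Ioc]
    omega
  rw [← Finset.card_filter, hcol, Nat.card_Ioc]
  have := hle i hi hid
  omega

/-- Visual result: `Im M_A ∈ Ω_λ(L)` iff all entries of `A`
lying in the full part of the rotated Young diagram `λ^rot` vanish; the number
of these positions is `|λ| = λ₁ + ⋯ + λ_d`, so `Ω_λ(L) ∩ U^λ` is cut out in
the chart by `|λ|` independent linear equations. -/
theorem stmt_15 (N c d : ℕ) (hN : N = c + d)
    (lam : ℕ → ℕ) (hlam_anti : ∀ i j, 1 ≤ i → i ≤ j → j ≤ d → lam j ≤ lam i)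
    (hlam_le : ∀ i, 1 ≤ i → i ≤ d → lam i ≤ c)
    (A : ℕ → ℕ → ℂ) :
    ((∀ i, 1 ≤ i → i ≤ d →
        i ≤ Module.finrank ℂ ↥(colSpan N c d lam A ⊓ stdFlag N (c + i - lam i))) ↔
      (∀ j r, 1 ≤ j → j ≤ d → c - lam j < r → r ≤ c → A r j = 0)) ∧
    (((Finset.Icc 1 c) ×ˢ (Finset.Icc 1 d)).filter
        (fun p => c - lam p.2 < p.1)).card = ∑ i ∈ Finset.Icc 1 d, lam i := by
  have hlam : IsBoxPartition c d lam := ⟨hlam_anti, hlam_le⟩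
  refine ⟨?_, card_filter_sub_lt_eq_sum hlam_le⟩
  subst hN
  calc (∀ i, 1 ≤ i → i ≤ d →
        i ≤ Module.finrank ℂ ↥(colSpan (c + d) c d lam A ⊓ stdFlag (c + d) (c + i - lam i)))
      ↔ ∀ i, 1 ≤ i → i ≤ d → ∀ j, 1 ≤ j → j ≤ i →
          ∀ q, c + i - lam i < q → q ≤ c + d → interleaved c d lam A q j = 0 :=
        forall₃_congr fun i hi hid => hlam.le_finrank_colSpan_inf_iff rfl A hi hid
    _ ↔ ∀ j, 1 ≤ j → j ≤ d →
          ∀ q, c + j - lam j < q → q ≤ c + d → interleaved c d lam A q j = 0 := by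
        refine ⟨fun h j hj hjd => h j hj hjd j hj le_rfl, fun h i _ hid j hj hji q hiq => ?_⟩
        exact h j hj (hji.trans hid) q ((hlam.pivot_le hj hji hid).trans_lt hiq)
    _ ↔ ∀ j, 1 ≤ j → j ≤ d → ∀ r, c - lam j < r → r ≤ c → A r j = 0 :=
        forall₃_congr fun j hj hjd => hlam.interleaved_below_pivot_eq_zero_iff A hj hjd
    _ ↔ _ := ⟨fun h j r hj hjd => h j hj hjd r, fun h j hj hjd r => h j r hj hjd⟩
end
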